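/- Let B ∈ (0, (2/3)√6), set s := √(B⁴ − B² + 1), A := √(12 − 15B² + 12s)/3, and a := (2B² − s − 1)/√(−3B² + 6 + 6s). Then 12 − 15B² + 12s > 0 and −3B² + 6 + 6s > 0 (so A and a are well-defined and A > 0), and the 4×2 quaternionic matrix M̂ = [L; M] with L = [[A, 0], [0, B]] and M = [[0, a], [a, 0]] lies in M_{2,2}. Moreover M̂ is diag(p,p)-equivariant for every unit quaternion p, and M̂ is [[cos θ, sin θ], [−sin θ, cos θ]]-equivariant for every θ ∈ ℝ (conformal superspherical symmetry). -/

import Mathlib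

open Matrix

noncomputable section

abbrev ℍ := Quaternion ℝ

/-- The quaternion `i`. -/
def qi : ℍ := ⟨0, 1, 0, 0⟩
/-- The quaternion `j`. -/
def qj : ℍ := ⟨0, 0, 1, 0⟩
/-- The quaternion `k`. -/
def qk : ℍ := ⟨0, 0, 0, 1⟩

/-- `e^{iθ} = cos θ + i sin θ` as a quaternion. -/
def eI (θ : ℝ) : ℍ := ⟨Real.cos θ, Real.sin θ, 0, 0⟩

/-- Entrywise right multiplication of a quaternionic matrix by a quaternion scalar. -/
def rsmul {I J : Type*} (A : Matrix I J ℍ) (x : ℍ) : Matrix I J ℍ := A.map (· * x)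

/-- Entrywise left multiplication of a quaternionic matrix by a quaternion scalar. -/
def lsmul {I J : Type*} (x : ℍ) (A : Matrix I J ℍ) : Matrix I J ℍ := A.map (x * ·)

/-- A quaternionic matrix is real if each entry lies in `ℝ ⊆ ℍ`. -/
def IsRealMatrix {I J : Type*} (A : Matrix I J ℍ) : Prop :=
  ∀ i j, A i j = ((A i j).re : ℍ)

/-- Positive definiteness: `v† A v` is a positive real for every nonzero `v`. -/
def IsPosDefQ {I : Type*} [Fintype I] (A : Matrix I I ℍ) : Prop :=
  ∀ v : I → ℍ, v ≠ 0 → ∃ r : ℝ, 0 < r ∧ star v ⬝ᵥ A.mulVec v = (r : ℍ)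

/-- Membership in the compact symplectic group `Sp`. -/
def IsSp {I : Type*} [Fintype I] [DecidableEq I] (Q : Matrix I I ℍ) : Prop := Qᴴ * Q = 1

/-- Inclusion of real matrices into quaternionic matrices. -/
def qmap {I J : Type*} (K : Matrix I J ℝ) : Matrix I J ℍ := K.map (fun r => (r : ℍ))

/-- The matrix `U = [0; I_k]`. -/
def Uh (n k : ℕ) : Matrix (Fin n ⊕ Fin k) (Fin k) ℍ := Matrix.fromRows 0 1

/-- The matrix `M̂ = [L; M]`. -/
def Mh {n k : ℕ} (L : Matrix (Fin n) (Fin k) ℍ) (M : Matrix (Fin k) (Fin k) ℍ) :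
    Matrix (Fin n ⊕ Fin k) (Fin k) ℍ := Matrix.fromRows L M

/-- `Δ(x) = a − b·x`. -/
def Delta {n k : ℕ} (a b : Matrix (Fin n ⊕ Fin k) (Fin k) ℍ) (x : ℍ) :
    Matrix (Fin n ⊕ Fin k) (Fin k) ℍ := a - rsmul b x

/-- ADHM data: `b` has full column rank and `Δ(x)†Δ(x)` is real positive definite for all `x`. -/
def IsADHM {n k : ℕ} (a b : Matrix (Fin n ⊕ Fin k) (Fin k) ℍ) : Prop :=
  (∀ v : Fin k → ℍ, b.mulVec v = 0 → v = 0) ∧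
  ∀ x : ℍ, IsRealMatrix ((Delta a b x)ᴴ * Delta a b x) ∧
    IsPosDefQ ((Delta a b x)ᴴ * Delta a b x)

/-- Membership of `M̂ = [L; M]` in `M_{n,k}`. -/
def InM {n k : ℕ} (L : Matrix (Fin n) (Fin k) ℍ) (M : Matrix (Fin k) (Fin k) ℍ) : Prop :=
  Mᵀ = M ∧ IsPosDefQ (L * Lᴴ) ∧
  IsRealMatrix (Lᴴ * L + Mᴴ * M) ∧ IsUnit (Lᴴ * L + Mᴴ * M) ∧
  ∀ x : ℍ, IsUnit ((Delta (Mh L M) (Uh n k) x)ᴴ * Delta (Mh L M) (Uh n k) x)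

/-- The gaugeAct action of `(Q, K) ∈ Sp(n+k) × GL(k,ℝ)` on an `(n+k)×k` matrix. -/
def gaugeAct {n k : ℕ} (Q : Matrix (Fin n ⊕ Fin k) (Fin n ⊕ Fin k) ℍ)
    (K : Matrix (Fin k) (Fin k) ℝ) (a : Matrix (Fin n ⊕ Fin k) (Fin k) ℍ) :
    Matrix (Fin n ⊕ Fin k) (Fin k) ℍ :=
  Q * a * qmap K⁻¹

/-- The conformal action of a 2×2 quaternionic matrix on a pair of `(n+k)×k` matrices. -/
def confAct {n k : ℕ} (A : Matrix (Fin 2) (Fin 2) ℍ)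
    (p : Matrix (Fin n ⊕ Fin k) (Fin k) ℍ × Matrix (Fin n ⊕ Fin k) (Fin k) ℍ) :
    Matrix (Fin n ⊕ Fin k) (Fin k) ℍ × Matrix (Fin n ⊕ Fin k) (Fin k) ℍ :=
  (rsmul p.1 (A 1 1) - rsmul p.2 (A 0 1), rsmul p.2 (A 0 0) - rsmul p.1 (A 1 0))

/-- `M̂` is `Ã`-equivariant: some gaugeAct transformation undoes the conformal action of `Ã`. -/
def Equivariant {n k : ℕ} (L : Matrix (Fin n) (Fin k) ℍ) (M : Matrix (Fin k) (Fin k) ℍ)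
    (A : Matrix (Fin 2) (Fin 2) ℍ) : Prop :=
  ∃ (Q : Matrix (Fin n ⊕ Fin k) (Fin n ⊕ Fin k) ℍ) (K : Matrix (Fin k) (Fin k) ℝ),
    IsSp Q ∧ IsUnit K ∧
    gaugeAct Q K (confAct A (Mh L M, Uh n k)).1 = Mh L M ∧
    gaugeAct Q K (confAct A (Mh L M, Uh n k)).2 = Uh n k

/-- Circular `t`-symmetry: equivariance under `diag(e^{iθ}, e^{tiθ})` for all `θ`. -/
def CircularSym {n k : ℕ} (L : Matrix (Fin n) (Fin k) ℍ) (M : Matrix (Fin k) (Fin k) ℍ)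
    (t : ℝ) : Prop :=
  ∀ θ : ℝ, Equivariant L M !![eI θ, 0; 0, eI (t * θ)]

/-- Toral symmetry: equivariance under `diag(e^{iφ₁}, e^{iφ₂})` for all `φ₁, φ₂`. -/
def ToralSym {n k : ℕ} (L : Matrix (Fin n) (Fin k) ℍ) (M : Matrix (Fin k) (Fin k) ℍ) : Prop :=
  ∀ φ₁ φ₂ : ℝ, Equivariant L M !![eI φ₁, 0; 0, eI φ₂]



lemma coe_eq_algebraMap : (fun r : ℝ => (r : ℍ)) = ⇑(algebraMap ℝ ℍ) := by
  funext r; rw [Quaternion.algebraMap_def]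

lemma qmap_mul {n m k : Type*} [Fintype m] (X : Matrix n m ℝ) (Y : Matrix m k ℝ) :
    qmap (X * Y) = qmap X * qmap Y := by
  simp only [qmap, coe_eq_algebraMap, Matrix.map_mul]

lemma qmap_one {n : Type*} [Fintype n] [DecidableEq n] : qmap (1 : Matrix n n ℝ) = 1 := by
  simp only [qmap, coe_eq_algebraMap, Matrix.map_one (algebraMap ℝ ℍ) (map_zero _) (map_one _)]

lemma qmap_conjTranspose {n m : Type*} (X : Matrix n m ℝ) : (qmap X)ᴴ = qmap Xᵀ := by
  refine Matrix.ext fun i j => ?_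
  simp only [qmap, conjTranspose_apply, Matrix.map_apply, transpose_apply, Quaternion.star_coe]

lemma rsmul_qmap {n m : Type*} (X : Matrix n m ℝ) (r : ℝ) :
    rsmul (qmap X) (r : ℍ) = qmap (r • X) := by
  refine Matrix.ext fun i j => ?_
  simp only [rsmul, qmap, Matrix.map_apply, Matrix.smul_apply, smul_eq_mul,
    ← Quaternion.coe_mul, mul_comm]

lemma qmap_zero {n m : Type*} : qmap (0 : Matrix n m ℝ) = 0 := by
  refine Matrix.ext fun i j => ?_
  simp [qmap]

lemma qmap_sub {n m : Type*} (X Y : Matrix n m ℝ) : qmap (X - Y) = qmap X - qmap Y := by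
  refine Matrix.ext fun i j => ?_
  simp [qmap, Quaternion.coe_sub]

lemma qmap_fromRows {m₁ m₂ n : Type*} (X : Matrix m₁ n ℝ) (Y : Matrix m₂ n ℝ) :
    qmap (fromRows X Y) = fromRows (qmap X) (qmap Y) := by
  refine Matrix.ext fun i j => ?_
  rcases i with i|i <;> simp [qmap, Matrix.fromRows_apply_inl, Matrix.fromRows_apply_inr]

namespace S19

def Lm (A B : ℝ) : Matrix (Fin 2) (Fin 2) ℝ := !![A, 0; 0, B]
def Mm (a : ℝ) : Matrix (Fin 2) (Fin 2) ℝ := !![0, a; a, 0]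
def Pm (A B a : ℝ) : Matrix (Fin 2) (Fin 2) ℝ := !![A^2+a^2, 0; 0, B^2+a^2]
def Km (A B a c st ie : ℝ) : Matrix (Fin 2) (Fin 2) ℝ :=
  !![c, 3/2*st*(B^2+a^2+1)*ie; -(3/2*st*(A^2+a^2+1)*ie), c]
def Sm (c st : ℝ) : Matrix (Fin 2 ⊕ Fin 2) (Fin 2 ⊕ Fin 2) ℝ :=
  fromBlocks (c • 1) (st • 1) ((-st) • 1) (c • 1)
def Nm (A B a : ℝ) : Matrix (Fin 2 ⊕ Fin 2) (Fin 2 ⊕ Fin 2) ℝ :=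
  fromBlocks (Lm A B) 0 (Mm a) 1
def Nim (A B a : ℝ) : Matrix (Fin 2 ⊕ Fin 2) (Fin 2 ⊕ Fin 2) ℝ :=
  fromBlocks !![A⁻¹, 0; 0, B⁻¹] 0 (-(Mm a * !![A⁻¹, 0; 0, B⁻¹])) 1
def Gm (A B a : ℝ) : Matrix (Fin 2 ⊕ Fin 2) (Fin 2 ⊕ Fin 2) ℝ :=
  fromBlocks (Pm A B a) (Mm a) (Mm a) 1
def Khat (A B a c st ie : ℝ) : Matrix (Fin 2 ⊕ Fin 2) (Fin 2 ⊕ Fin 2) ℝ :=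
  fromBlocks (Km A B a c st ie) 0 0 (Km A B a c st ie)

variable {A B a e ie c st : ℝ}

lemma LLi (hA : A ≠ 0) (hB : B ≠ 0) :
    Lm A B * !![A⁻¹, 0; 0, B⁻¹] = 1 := by
  ext i j
  fin_cases i <;> fin_cases j <;>
    simp [Lm, Matrix.mul_apply, Fin.sum_univ_two, Matrix.one_apply] <;> field_simp

lemma LiL (hA : A ≠ 0) (hB : B ≠ 0) :
    (!![A⁻¹, 0; 0, B⁻¹] : Matrix (Fin 2) (Fin 2) ℝ) * Lm A B = 1 := by
  ext i j
  fin_cases i <;> fin_cases j <;>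
    simp [Lm, Matrix.mul_apply, Fin.sum_univ_two, Matrix.one_apply] <;> field_simp

lemma NNi (hA : A ≠ 0) (hB : B ≠ 0) : Nm A B a * Nim A B a = 1 := by
  rw [Nm, Nim, fromBlocks_multiply, ← fromBlocks_one, fromBlocks_inj]
  refine ⟨?_, by simp, ?_, by simp⟩
  · rw [Matrix.zero_mul, add_zero, LLi hA hB]
  · rw [Matrix.one_mul]; exact add_neg_cancel (Mm a * !![A⁻¹, 0; 0, B⁻¹])
lemma NiN (hA : A ≠ 0) (hB : B ≠ 0) : Nim A B a * Nm A B a = 1 := by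
  rw [Nm, Nim, fromBlocks_multiply, ← fromBlocks_one, fromBlocks_inj]
  refine ⟨?_, by simp, ?_, by simp⟩
  · rw [Matrix.zero_mul, add_zero, LiL hA hB]
  · rw [Matrix.neg_mul, Matrix.mul_assoc, LiL hA hB, Matrix.mul_one, Matrix.one_mul,
      neg_add_cancel]

lemma Lmt : (Lm A B)ᵀ = Lm A B := by
  ext i j; fin_cases i <;> fin_cases j <;> simp [Lm]

lemma Mmt : (Mm a)ᵀ = Mm a := by
  ext i j; fin_cases i <;> fin_cases j <;> simp [Mm]

lemma gram : (Nm A B a)ᵀ * Nm A B a = Gm A B a := by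
  rw [Nm, fromBlocks_transpose, fromBlocks_multiply, Gm, fromBlocks_inj, Lmt, Mmt]
  refine ⟨?_, ?_, ?_, by simp⟩
  · ext i j
    fin_cases i <;> fin_cases j <;>
      simp [Lm, Mm, Pm, Matrix.mul_apply, Fin.sum_univ_two] <;> ring
  · ext i j
    fin_cases i <;> fin_cases j <;>
      simp [Lm, Mm, Matrix.mul_apply, Fin.sum_univ_two]
  · ext i j
    fin_cases i <;> fin_cases j <;>
      simp [Lm, Mm, Matrix.mul_apply, Fin.sum_univ_two]

lemma smul_one_blk (x u y v : ℝ) :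
    (x • (1 : Matrix (Fin 2) (Fin 2) ℝ)) * (u • 1) + (y • 1) * (v • 1) = (x*u + y*v) • 1 := by
  simp [Matrix.smul_mul, Matrix.mul_smul, smul_smul, add_smul, mul_comm]

lemma SST (hc : c^2 + st^2 = 1) : Sm c st * (Sm c st)ᵀ = 1 := by
  rw [Sm, fromBlocks_transpose, fromBlocks_multiply, ← fromBlocks_one, fromBlocks_inj,
    transpose_smul, transpose_smul, transpose_smul, transpose_one]
  refine ⟨?_, ?_, ?_, ?_⟩ <;> rw [smul_one_blk]
  · rw [show c*c + st*st = 1 by linear_combination hc, one_smul]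
  · rw [show c*(-st) + st*c = 0 by ring, zero_smul]
  · rw [show (-st)*c + c*st = 0 by ring, zero_smul]
  · rw [show (-st)*(-st) + c*c = 1 by linear_combination hc, one_smul]

lemma STS (hc : c^2 + st^2 = 1) : (Sm c st)ᵀ * Sm c st = 1 := by
  rw [Sm, fromBlocks_transpose, fromBlocks_multiply, ← fromBlocks_one, fromBlocks_inj,
    transpose_smul, transpose_smul, transpose_smul, transpose_one]
  refine ⟨?_, ?_, ?_, ?_⟩ <;> rw [smul_one_blk]
  · rw [show c*c + (-st)*(-st) = 1 by linear_combination hc, one_smul]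
  · rw [show c*st + (-st)*c = 0 by ring, zero_smul]
  · rw [show st*c + c*(-st) = 0 by ring, zero_smul]
  · rw [show st*st + c*c = 1 by linear_combination hc, one_smul]
set_option maxHeartbeats 2000000 in
lemma HKey (hc : c^2 + st^2 = 1)
    (R1 : (A^2+a^2)*(B^2+a^2) = 1)
    (R2 : A^2+B^2 = 2*a^2+2)
    (R3 : e^2 = 9 + 9*a^2)
    (R4 : 3*A^2 - 3*B^2 = -(4*(a*e)))
    (hie : e * ie = 1) :
    (Khat A B a c st ie)ᵀ * Gm A B a * Khat A B a c st ie
      = (Sm c st)ᵀ * Gm A B a * Sm c st := by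
  ext i j
  rcases i with i|i <;> rcases j with j|j <;> fin_cases i <;> fin_cases j
  · simp only [Matrix.mul_apply, Fintype.sum_sum_type, Fin.sum_univ_two,
      Matrix.transpose_apply, Matrix.fromBlocks_apply₁₁, Matrix.fromBlocks_apply₁₂,
      Matrix.fromBlocks_apply₂₁, Matrix.fromBlocks_apply₂₂, Matrix.smul_apply,
      Matrix.one_apply, Matrix.zero_apply, smul_eq_mul, Khat, Km, Gm, Pm, Mm, Sm,
      Matrix.cons_val', Matrix.cons_val_zero, Matrix.cons_val_one, Matrix.head_cons,
      Matrix.empty_val', Matrix.cons_val_fin_one, Matrix.head_fin_const,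
      Fin.isValue, mul_zero, zero_mul, add_zero, zero_add, mul_one, one_mul,
      Sum.inl.injEq, Sum.inr.injEq, reduceCtorEq, if_true, if_false]
    norm_num
    linear_combination (9/4*A^2*st^2*ie^2 + 9/4*a^2*st^2*ie^2 + 9/2*st^2*ie^2) * R1 + (9/4*st^2*ie^2) * R2 + (-1*st^2*ie^2) * R3 + (1*st^2*e*ie + 1*st^2) * hie
  · simp only [Matrix.mul_apply, Fintype.sum_sum_type, Fin.sum_univ_two,
      Matrix.transpose_apply, Matrix.fromBlocks_apply₁₁, Matrix.fromBlocks_apply₁₂,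
      Matrix.fromBlocks_apply₂₁, Matrix.fromBlocks_apply₂₂, Matrix.smul_apply,
      Matrix.one_apply, Matrix.zero_apply, smul_eq_mul, Khat, Km, Gm, Pm, Mm, Sm,
      Matrix.cons_val', Matrix.cons_val_zero, Matrix.cons_val_one, Matrix.head_cons,
      Matrix.empty_val', Matrix.cons_val_fin_one, Matrix.head_fin_const,
      Fin.isValue, mul_zero, zero_mul, add_zero, zero_add, mul_one, one_mul,
      Sum.inl.injEq, Sum.inr.injEq, reduceCtorEq, if_true, if_false]
    norm_num
    linear_combination (1/2*c*st*e*ie^2) * R4 + (-3/2*A^2*c*st*ie + -2*a*c*st*e*ie + -2*a*c*st + 3/2*c*st*ie*B^2) * hie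
  · simp only [Matrix.mul_apply, Fintype.sum_sum_type, Fin.sum_univ_two,
      Matrix.transpose_apply, Matrix.fromBlocks_apply₁₁, Matrix.fromBlocks_apply₁₂,
      Matrix.fromBlocks_apply₂₁, Matrix.fromBlocks_apply₂₂, Matrix.smul_apply,
      Matrix.one_apply, Matrix.zero_apply, smul_eq_mul, Khat, Km, Gm, Pm, Mm, Sm,
      Matrix.cons_val', Matrix.cons_val_zero, Matrix.cons_val_one, Matrix.head_cons,
      Matrix.empty_val', Matrix.cons_val_fin_one, Matrix.head_fin_const,
      Fin.isValue, mul_zero, zero_mul, add_zero, zero_add, mul_one, one_mul,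
      Sum.inl.injEq, Sum.inr.injEq, reduceCtorEq, if_true, if_false]
    norm_num
    linear_combination (1/2*c*st*e*ie^2) * R4 + (-3/2*A^2*c*st*ie + -2*a*c*st*e*ie + -2*a*c*st + 3/2*c*st*ie*B^2) * hie
  · simp only [Matrix.mul_apply, Fintype.sum_sum_type, Fin.sum_univ_two,
      Matrix.transpose_apply, Matrix.fromBlocks_apply₁₁, Matrix.fromBlocks_apply₁₂,
      Matrix.fromBlocks_apply₂₁, Matrix.fromBlocks_apply₂₂, Matrix.smul_apply,
      Matrix.one_apply, Matrix.zero_apply, smul_eq_mul, Khat, Km, Gm, Pm, Mm, Sm,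
      Matrix.cons_val', Matrix.cons_val_zero, Matrix.cons_val_one, Matrix.head_cons,
      Matrix.empty_val', Matrix.cons_val_fin_one, Matrix.head_fin_const,
      Fin.isValue, mul_zero, zero_mul, add_zero, zero_add, mul_one, one_mul,
      Sum.inl.injEq, Sum.inr.injEq, reduceCtorEq, if_true, if_false]
    norm_num
    linear_combination (9/4*a^2*st^2*ie^2 + 9/4*st^2*ie^2*B^2 + 9/2*st^2*ie^2) * R1 + (9/4*st^2*ie^2) * R2 + (-1*st^2*ie^2) * R3 + (1*st^2*e*ie + 1*st^2) * hie
  · simp only [Matrix.mul_apply, Fintype.sum_sum_type, Fin.sum_univ_two,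
      Matrix.transpose_apply, Matrix.fromBlocks_apply₁₁, Matrix.fromBlocks_apply₁₂,
      Matrix.fromBlocks_apply₂₁, Matrix.fromBlocks_apply₂₂, Matrix.smul_apply,
      Matrix.one_apply, Matrix.zero_apply, smul_eq_mul, Khat, Km, Gm, Pm, Mm, Sm,
      Matrix.cons_val', Matrix.cons_val_zero, Matrix.cons_val_one, Matrix.head_cons,
      Matrix.empty_val', Matrix.cons_val_fin_one, Matrix.head_fin_const,
      Fin.isValue, mul_zero, zero_mul, add_zero, zero_add, mul_one, one_mul,
      Sum.inl.injEq, Sum.inr.injEq, reduceCtorEq, if_true, if_false]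
    norm_num
    linear_combination (-9/8*A^2*c*st*ie^2 + -3*a*c*st*ie + -1/4*c*st*e*ie + 9/8*c*st*ie^2*B^2 + -1/4*c*st) * R2 + (1/4*A^2*c*st*ie^2 + 1*a*c*st*ie + -1/6*c*st*e*ie + -1/4*c*st*ie^2*B^2 + 1/6*c*st) * R3 + (3/8*A^2*c*st*e*ie^3 + -1/2*a*c*st*ie + 3/8*c*st*e*ie^3*B^2 + -1/4*c*st*e*ie) * R4 + (-9/8*A^4*c*st*ie^2 + -3/2*A^2*a*c*st*e*ie^2 + -3/2*A^2*a*c*st*ie + -1/4*A^2*c*st*e*ie + 3/4*A^2*c*st + -3/2*a*c*st*e*ie^2*B^2 + -3/2*a*c*st*ie*B^2 + 1/6*c*st*e^2 + 1/4*c*st*e*ie*B^2 + 9/8*c*st*ie^2*B^4 + -1/4*c*st*B^2 + -2*c*st) * hie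
  · simp only [Matrix.mul_apply, Fintype.sum_sum_type, Fin.sum_univ_two,
      Matrix.transpose_apply, Matrix.fromBlocks_apply₁₁, Matrix.fromBlocks_apply₁₂,
      Matrix.fromBlocks_apply₂₁, Matrix.fromBlocks_apply₂₂, Matrix.smul_apply,
      Matrix.one_apply, Matrix.zero_apply, smul_eq_mul, Khat, Km, Gm, Pm, Mm, Sm,
      Matrix.cons_val', Matrix.cons_val_zero, Matrix.cons_val_one, Matrix.head_cons,
      Matrix.empty_val', Matrix.cons_val_fin_one, Matrix.head_fin_const,
      Fin.isValue, mul_zero, zero_mul, add_zero, zero_add, mul_one, one_mul,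
      Sum.inl.injEq, Sum.inr.injEq, reduceCtorEq, if_true, if_false]
    norm_num
    linear_combination (9/4*a*st^2*ie^2) * R1 + (9/4*a*st^2*ie^2) * R2 + (-1*a*st^2*ie^2) * R3 + (1*a*st^2*e*ie + 1*a*st^2) * hie
  · simp only [Matrix.mul_apply, Fintype.sum_sum_type, Fin.sum_univ_two,
      Matrix.transpose_apply, Matrix.fromBlocks_apply₁₁, Matrix.fromBlocks_apply₁₂,
      Matrix.fromBlocks_apply₂₁, Matrix.fromBlocks_apply₂₂, Matrix.smul_apply,
      Matrix.one_apply, Matrix.zero_apply, smul_eq_mul, Khat, Km, Gm, Pm, Mm, Sm,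
      Matrix.cons_val', Matrix.cons_val_zero, Matrix.cons_val_one, Matrix.head_cons,
      Matrix.empty_val', Matrix.cons_val_fin_one, Matrix.head_fin_const,
      Fin.isValue, mul_zero, zero_mul, add_zero, zero_add, mul_one, one_mul,
      Sum.inl.injEq, Sum.inr.injEq, reduceCtorEq, if_true, if_false]
    norm_num
    linear_combination (-9/4*a*st^2*ie^2) * R1 + (-9/4*a*st^2*ie^2) * R2 + (1*a*st^2*ie^2) * R3 + (-1*a*st^2*e*ie + -1*a*st^2) * hie
  · simp only [Matrix.mul_apply, Fintype.sum_sum_type, Fin.sum_univ_two,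
      Matrix.transpose_apply, Matrix.fromBlocks_apply₁₁, Matrix.fromBlocks_apply₁₂,
      Matrix.fromBlocks_apply₂₁, Matrix.fromBlocks_apply₂₂, Matrix.smul_apply,
      Matrix.one_apply, Matrix.zero_apply, smul_eq_mul, Khat, Km, Gm, Pm, Mm, Sm,
      Matrix.cons_val', Matrix.cons_val_zero, Matrix.cons_val_one, Matrix.head_cons,
      Matrix.empty_val', Matrix.cons_val_fin_one, Matrix.head_fin_const,
      Fin.isValue, mul_zero, zero_mul, add_zero, zero_add, mul_one, one_mul,
      Sum.inl.injEq, Sum.inr.injEq, reduceCtorEq, if_true, if_false]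
    norm_num
    linear_combination (-9/8*A^2*c*st*ie^2 + -1/4*c*st*e*ie + 9/8*c*st*ie^2*B^2 + -1/4*c*st) * R2 + (1/4*A^2*c*st*ie^2 + -1/3*a*c*st*ie + -1/6*c*st*e*ie + -1/4*c*st*ie^2*B^2 + 1/6*c*st) * R3 + (3/8*A^2*c*st*e*ie^3 + -1/2*a*c*st*ie + 3/8*c*st*e*ie^3*B^2 + 1/12*c*st*e*ie) * R4 + (-9/8*A^4*c*st*ie^2 + -3/2*A^2*a*c*st*e*ie^2 + -3/2*A^2*a*c*st*ie + -1/4*A^2*c*st*e*ie + -1/4*A^2*c*st + -3/2*a*c*st*e*ie^2*B^2 + -3/2*a*c*st*ie*B^2 + 1/6*c*st*e^2 + 1/4*c*st*e*ie*B^2 + 9/8*c*st*ie^2*B^4 + 3/4*c*st*B^2 + -2*c*st) * hie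
  · simp only [Matrix.mul_apply, Fintype.sum_sum_type, Fin.sum_univ_two,
      Matrix.transpose_apply, Matrix.fromBlocks_apply₁₁, Matrix.fromBlocks_apply₁₂,
      Matrix.fromBlocks_apply₂₁, Matrix.fromBlocks_apply₂₂, Matrix.smul_apply,
      Matrix.one_apply, Matrix.zero_apply, smul_eq_mul, Khat, Km, Gm, Pm, Mm, Sm,
      Matrix.cons_val', Matrix.cons_val_zero, Matrix.cons_val_one, Matrix.head_cons,
      Matrix.empty_val', Matrix.cons_val_fin_one, Matrix.head_fin_const,
      Fin.isValue, mul_zero, zero_mul, add_zero, zero_add, mul_one, one_mul,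
      Sum.inl.injEq, Sum.inr.injEq, reduceCtorEq, if_true, if_false]
    norm_num
    linear_combination (-9/8*A^2*c*st*ie^2 + -3*a*c*st*ie + -1/4*c*st*e*ie + 9/8*c*st*ie^2*B^2 + -1/4*c*st) * R2 + (1/4*A^2*c*st*ie^2 + 1*a*c*st*ie + -1/6*c*st*e*ie + -1/4*c*st*ie^2*B^2 + 1/6*c*st) * R3 + (3/8*A^2*c*st*e*ie^3 + -1/2*a*c*st*ie + 3/8*c*st*e*ie^3*B^2 + -1/4*c*st*e*ie) * R4 + (-9/8*A^4*c*st*ie^2 + -3/2*A^2*a*c*st*e*ie^2 + -3/2*A^2*a*c*st*ie + -1/4*A^2*c*st*e*ie + 3/4*A^2*c*st + -3/2*a*c*st*e*ie^2*B^2 + -3/2*a*c*st*ie*B^2 + 1/6*c*st*e^2 + 1/4*c*st*e*ie*B^2 + 9/8*c*st*ie^2*B^4 + -1/4*c*st*B^2 + -2*c*st) * hie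
  · simp only [Matrix.mul_apply, Fintype.sum_sum_type, Fin.sum_univ_two,
      Matrix.transpose_apply, Matrix.fromBlocks_apply₁₁, Matrix.fromBlocks_apply₁₂,
      Matrix.fromBlocks_apply₂₁, Matrix.fromBlocks_apply₂₂, Matrix.smul_apply,
      Matrix.one_apply, Matrix.zero_apply, smul_eq_mul, Khat, Km, Gm, Pm, Mm, Sm,
      Matrix.cons_val', Matrix.cons_val_zero, Matrix.cons_val_one, Matrix.head_cons,
      Matrix.empty_val', Matrix.cons_val_fin_one, Matrix.head_fin_const,
      Fin.isValue, mul_zero, zero_mul, add_zero, zero_add, mul_one, one_mul,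
      Sum.inl.injEq, Sum.inr.injEq, reduceCtorEq, if_true, if_false]
    norm_num
    linear_combination (-9/4*a*st^2*ie^2) * R1 + (-9/4*a*st^2*ie^2) * R2 + (1*a*st^2*ie^2) * R3 + (-1*a*st^2*e*ie + -1*a*st^2) * hie
  · simp only [Matrix.mul_apply, Fintype.sum_sum_type, Fin.sum_univ_two,
      Matrix.transpose_apply, Matrix.fromBlocks_apply₁₁, Matrix.fromBlocks_apply₁₂,
      Matrix.fromBlocks_apply₂₁, Matrix.fromBlocks_apply₂₂, Matrix.smul_apply,
      Matrix.one_apply, Matrix.zero_apply, smul_eq_mul, Khat, Km, Gm, Pm, Mm, Sm,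
      Matrix.cons_val', Matrix.cons_val_zero, Matrix.cons_val_one, Matrix.head_cons,
      Matrix.empty_val', Matrix.cons_val_fin_one, Matrix.head_fin_const,
      Fin.isValue, mul_zero, zero_mul, add_zero, zero_add, mul_one, one_mul,
      Sum.inl.injEq, Sum.inr.injEq, reduceCtorEq, if_true, if_false]
    norm_num
    linear_combination (9/4*a*st^2*ie^2) * R1 + (9/4*a*st^2*ie^2) * R2 + (-1*a*st^2*ie^2) * R3 + (1*a*st^2*e*ie + 1*a*st^2) * hie
  · simp only [Matrix.mul_apply, Fintype.sum_sum_type, Fin.sum_univ_two,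
      Matrix.transpose_apply, Matrix.fromBlocks_apply₁₁, Matrix.fromBlocks_apply₁₂,
      Matrix.fromBlocks_apply₂₁, Matrix.fromBlocks_apply₂₂, Matrix.smul_apply,
      Matrix.one_apply, Matrix.zero_apply, smul_eq_mul, Khat, Km, Gm, Pm, Mm, Sm,
      Matrix.cons_val', Matrix.cons_val_zero, Matrix.cons_val_one, Matrix.head_cons,
      Matrix.empty_val', Matrix.cons_val_fin_one, Matrix.head_fin_const,
      Fin.isValue, mul_zero, zero_mul, add_zero, zero_add, mul_one, one_mul,
      Sum.inl.injEq, Sum.inr.injEq, reduceCtorEq, if_true, if_false]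
    norm_num
    linear_combination (-9/8*A^2*c*st*ie^2 + -1/4*c*st*e*ie + 9/8*c*st*ie^2*B^2 + -1/4*c*st) * R2 + (1/4*A^2*c*st*ie^2 + -1/3*a*c*st*ie + -1/6*c*st*e*ie + -1/4*c*st*ie^2*B^2 + 1/6*c*st) * R3 + (3/8*A^2*c*st*e*ie^3 + -1/2*a*c*st*ie + 3/8*c*st*e*ie^3*B^2 + 1/12*c*st*e*ie) * R4 + (-9/8*A^4*c*st*ie^2 + -3/2*A^2*a*c*st*e*ie^2 + -3/2*A^2*a*c*st*ie + -1/4*A^2*c*st*e*ie + -1/4*A^2*c*st + -3/2*a*c*st*e*ie^2*B^2 + -3/2*a*c*st*ie*B^2 + 1/6*c*st*e^2 + 1/4*c*st*e*ie*B^2 + 9/8*c*st*ie^2*B^4 + 3/4*c*st*B^2 + -2*c*st) * hie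
  · simp only [Matrix.mul_apply, Fintype.sum_sum_type, Fin.sum_univ_two,
      Matrix.transpose_apply, Matrix.fromBlocks_apply₁₁, Matrix.fromBlocks_apply₁₂,
      Matrix.fromBlocks_apply₂₁, Matrix.fromBlocks_apply₂₂, Matrix.smul_apply,
      Matrix.one_apply, Matrix.zero_apply, smul_eq_mul, Khat, Km, Gm, Pm, Mm, Sm,
      Matrix.cons_val', Matrix.cons_val_zero, Matrix.cons_val_one, Matrix.head_cons,
      Matrix.empty_val', Matrix.cons_val_fin_one, Matrix.head_fin_const,
      Fin.isValue, mul_zero, zero_mul, add_zero, zero_add, mul_one, one_mul,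
      Sum.inl.injEq, Sum.inr.injEq, reduceCtorEq, if_true, if_false]
    norm_num
    linear_combination (9*st^2*ie^2) * R1 + (-9/16*A^2*st^2*ie^2 + -5/8*st^2*e*ie + -45/16*st^2*ie^2*B^2 + 9*st^2*ie^2 + -1*st^2) * R2 + (5/8*A^2*st^2*ie^2 + 3/4*a^2*st^2*ie^2 + 1/12*st^2*e^2*ie^2 + -5/12*st^2*e*ie + 13/8*st^2*ie^2*B^2 + -13/4*st^2*ie^2 + 1/3*st^2) * R3 + (15/16*A^2*st^2*e*ie^3 + -5/4*a*st^2*ie + -15/16*st^2*e*ie^3*B^2) * R4 + (-45/16*A^4*st^2*ie^2 + -15/4*A^2*a*st^2*e*ie^2 + -15/4*A^2*a*st^2*ie + -5/8*A^2*st^2*e*ie + 45/8*A^2*st^2*ie^2*B^2 + 15/4*a*st^2*e*ie^2*B^2 + 15/4*a*st^2*ie*B^2 + -1/12*st^2*e^3*ie + 1/3*st^2*e^2 + -13/8*st^2*e*ie*B^2 + 4*st^2*e*ie + -45/16*st^2*ie^2*B^4 + -1*st^2*B^2 + -1*st^2) * hie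
  · simp only [Matrix.mul_apply, Fintype.sum_sum_type, Fin.sum_univ_two,
      Matrix.transpose_apply, Matrix.fromBlocks_apply₁₁, Matrix.fromBlocks_apply₁₂,
      Matrix.fromBlocks_apply₂₁, Matrix.fromBlocks_apply₂₂, Matrix.smul_apply,
      Matrix.one_apply, Matrix.zero_apply, smul_eq_mul, Khat, Km, Gm, Pm, Mm, Sm,
      Matrix.cons_val', Matrix.cons_val_zero, Matrix.cons_val_one, Matrix.head_cons,
      Matrix.empty_val', Matrix.cons_val_fin_one, Matrix.head_fin_const,
      Fin.isValue, mul_zero, zero_mul, add_zero, zero_add, mul_one, one_mul,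
      Sum.inl.injEq, Sum.inr.injEq, reduceCtorEq, if_true, if_false]
    norm_num
    linear_combination (-1/2*c*st*e*ie^2) * R4 + (3/2*A^2*c*st*ie + 2*a*c*st*e*ie + 2*a*c*st + -3/2*c*st*ie*B^2) * hie
  · simp only [Matrix.mul_apply, Fintype.sum_sum_type, Fin.sum_univ_two,
      Matrix.transpose_apply, Matrix.fromBlocks_apply₁₁, Matrix.fromBlocks_apply₁₂,
      Matrix.fromBlocks_apply₂₁, Matrix.fromBlocks_apply₂₂, Matrix.smul_apply,
      Matrix.one_apply, Matrix.zero_apply, smul_eq_mul, Khat, Km, Gm, Pm, Mm, Sm,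
      Matrix.cons_val', Matrix.cons_val_zero, Matrix.cons_val_one, Matrix.head_cons,
      Matrix.empty_val', Matrix.cons_val_fin_one, Matrix.head_fin_const,
      Fin.isValue, mul_zero, zero_mul, add_zero, zero_add, mul_one, one_mul,
      Sum.inl.injEq, Sum.inr.injEq, reduceCtorEq, if_true, if_false]
    norm_num
    linear_combination (-1/2*c*st*e*ie^2) * R4 + (3/2*A^2*c*st*ie + 2*a*c*st*e*ie + 2*a*c*st + -3/2*c*st*ie*B^2) * hie
  · simp only [Matrix.mul_apply, Fintype.sum_sum_type, Fin.sum_univ_two,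
      Matrix.transpose_apply, Matrix.fromBlocks_apply₁₁, Matrix.fromBlocks_apply₁₂,
      Matrix.fromBlocks_apply₂₁, Matrix.fromBlocks_apply₂₂, Matrix.smul_apply,
      Matrix.one_apply, Matrix.zero_apply, smul_eq_mul, Khat, Km, Gm, Pm, Mm, Sm,
      Matrix.cons_val', Matrix.cons_val_zero, Matrix.cons_val_one, Matrix.head_cons,
      Matrix.empty_val', Matrix.cons_val_fin_one, Matrix.head_fin_const,
      Fin.isValue, mul_zero, zero_mul, add_zero, zero_add, mul_one, one_mul,
      Sum.inl.injEq, Sum.inr.injEq, reduceCtorEq, if_true, if_false]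
    norm_num
    linear_combination (-9/16*A^2*st^2*ie^2 + -1/8*st^2*e*ie + 27/16*st^2*ie^2*B^2) * R2 + (1/8*A^2*st^2*ie^2 + -1/4*a^2*st^2*ie^2 + -1/36*st^2*e^2*ie^2 + -1/12*st^2*e*ie + -7/8*st^2*ie^2*B^2 + -1/4*st^2*ie^2 + 1/9*st^2) * R3 + (3/16*A^2*st^2*e*ie^3 + -1/4*a*st^2*ie + -3/16*st^2*e*ie^3*B^2) * R4 + (-9/16*A^4*st^2*ie^2 + -3/4*A^2*a*st^2*e*ie^2 + -3/4*A^2*a*st^2*ie + -1/8*A^2*st^2*e*ie + 9/8*A^2*st^2*ie^2*B^2 + 3/4*a*st^2*e*ie^2*B^2 + 3/4*a*st^2*ie*B^2 + 1/36*st^2*e^3*ie + 1/9*st^2*e^2 + 7/8*st^2*e*ie*B^2 + -9/16*st^2*ie^2*B^4 + 1*st^2*B^2 + -1*st^2) * hie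


def Mhr (A B a : ℝ) : Matrix (Fin 2 ⊕ Fin 2) (Fin 2) ℝ := fromRows (Lm A B) (Mm a)
def Ur2 : Matrix (Fin 2 ⊕ Fin 2) (Fin 2) ℝ := fromRows 0 1
def E1 : Matrix (Fin 2 ⊕ Fin 2) (Fin 2) ℝ := fromRows 1 0
def E2 : Matrix (Fin 2 ⊕ Fin 2) (Fin 2) ℝ := fromRows 0 1
def Qm (A B a c st ie : ℝ) : Matrix (Fin 2 ⊕ Fin 2) (Fin 2 ⊕ Fin 2) ℝ :=
  Nm A B a * Khat A B a c st ie * (Sm c st)ᵀ * Nim A B a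

lemma smul_fromRows {m₁ m₂ n : Type*} (x : ℝ) (X : Matrix m₁ n ℝ) (Y : Matrix m₂ n ℝ) :
    x • fromRows X Y = fromRows (x • X) (x • Y) := by
  ext (i|i) j <;> simp [Matrix.fromRows_apply_inl, Matrix.fromRows_apply_inr]

lemma fromRows_sub {m₁ m₂ n : Type*} (X X' : Matrix m₁ n ℝ) (Y Y' : Matrix m₂ n ℝ) :
    fromRows X Y - fromRows X' Y' = fromRows (X - X') (Y - Y') := by
  ext (i|i) j <;> simp [Matrix.fromRows_apply_inl, Matrix.fromRows_apply_inr]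

lemma fromRows_add {m₁ m₂ n : Type*} (X X' : Matrix m₁ n ℝ) (Y Y' : Matrix m₂ n ℝ) :
    fromRows X Y + fromRows X' Y' = fromRows (X + X') (Y + Y') := by
  ext (i|i) j <;> simp [Matrix.fromRows_apply_inl, Matrix.fromRows_apply_inr]

lemma Qorth (hA : A ≠ 0) (hB : B ≠ 0) (hc : c^2 + st^2 = 1)
    (R1 : (A^2+a^2)*(B^2+a^2) = 1) (R2 : A^2+B^2 = 2*a^2+2)
    (R3 : e^2 = 9 + 9*a^2) (R4 : 3*A^2 - 3*B^2 = -(4*(a*e)))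
    (hie : e * ie = 1) :
    (Qm A B a c st ie)ᵀ * Qm A B a c st ie = 1 := by
  have hkey := HKey (A:=A) (B:=B) (a:=a) (e:=e) (ie:=ie) hc R1 R2 R3 R4 hie
  have hnni := NNi (A:=A) (B:=B) (a:=a) hA hB
  have hsst := SST (c:=c) (st:=st) hc
  have hg := gram (A:=A) (B:=B) (a:=a)
  rw [Qm]
  calc (Nm A B a * Khat A B a c st ie * (Sm c st)ᵀ * Nim A B a)ᵀ *
        (Nm A B a * Khat A B a c st ie * (Sm c st)ᵀ * Nim A B a)
      = (Nim A B a)ᵀ * (Sm c st *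
          ((Khat A B a c st ie)ᵀ * ((Nm A B a)ᵀ * Nm A B a) * Khat A B a c st ie) *
          (Sm c st)ᵀ) * Nim A B a := by
        simp only [transpose_mul, transpose_transpose, Matrix.mul_assoc]
    _ = (Nim A B a)ᵀ * (Sm c st *
          ((Sm c st)ᵀ * Gm A B a * Sm c st) * (Sm c st)ᵀ) * Nim A B a := by
        rw [hg, hkey]
    _ = (Nim A B a)ᵀ * ((Sm c st * (Sm c st)ᵀ) * Gm A B a * (Sm c st * (Sm c st)ᵀ)) *
          Nim A B a := by
        simp only [Matrix.mul_assoc]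
    _ = (Nim A B a)ᵀ * ((Nm A B a)ᵀ * Nm A B a) * Nim A B a := by
        rw [hsst, Matrix.one_mul, Matrix.mul_one, hg]
    _ = (Nm A B a * Nim A B a)ᵀ * (Nm A B a * Nim A B a) := by
        simp only [transpose_mul, Matrix.mul_assoc]
    _ = 1 := by rw [hnni, transpose_one, Matrix.one_mul]

lemma KhatE1 : Khat A B a c st ie * E1 = fromRows (Km A B a c st ie) (0 : Matrix (Fin 2) (Fin 2) ℝ) := by
  rw [Khat, E1, fromBlocks_mul_fromRows]
  simp

lemma KhatE2 : Khat A B a c st ie * E2 = fromRows (0 : Matrix (Fin 2) (Fin 2) ℝ) (Km A B a c st ie) := by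
  rw [Khat, E2, fromBlocks_mul_fromRows]
  simp

lemma NrowsK : Nm A B a * fromRows (Km A B a c st ie) (0 : Matrix (Fin 2) (Fin 2) ℝ) = Mhr A B a * Km A B a c st ie := by
  rw [Nm, fromBlocks_mul_fromRows, Mhr, fromRows_mul]
  simp

lemma NrowsK' : Nm A B a * fromRows (0 : Matrix (Fin 2) (Fin 2) ℝ) (Km A B a c st ie) = Ur2 * Km A B a c st ie := by
  rw [Nm, fromBlocks_mul_fromRows, Ur2, fromRows_mul]
  simp

lemma SE1 : Sm c st * E1 = fromRows ((c:ℝ) • 1) ((-st) • 1) := by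
  rw [Sm, E1, fromBlocks_mul_fromRows]
  simp

lemma SE2 : Sm c st * E2 = fromRows ((st:ℝ) • 1) (c • 1) := by
  rw [Sm, E2, fromBlocks_mul_fromRows]
  simp

lemma Nrows1 : Nm A B a * (fromRows ((c:ℝ) • 1) ((-st) • 1) : Matrix (Fin 2 ⊕ Fin 2) (Fin 2) ℝ) = c • Mhr A B a - st • Ur2 := by
  rw [Nm, fromBlocks_mul_fromRows, Mhr, Ur2, smul_fromRows, smul_fromRows, fromRows_sub]
  congr 1 <;> simp [Matrix.mul_smul, sub_eq_add_neg]

lemma Nrows2 : Nm A B a * (fromRows ((st:ℝ) • 1) (c • 1) : Matrix (Fin 2 ⊕ Fin 2) (Fin 2) ℝ) = st • Mhr A B a + c • Ur2 := by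
  rw [Nm, fromBlocks_mul_fromRows, Mhr, Ur2, smul_fromRows, smul_fromRows, fromRows_add]
  congr 1 <;> simp [Matrix.mul_smul]

lemma gauge1 (hA : A ≠ 0) (hB : B ≠ 0) (hc : c^2 + st^2 = 1) :
    Qm A B a c st ie * (c • Mhr A B a - st • Ur2) = Mhr A B a * Km A B a c st ie := by
  have hsts := STS (c:=c) (st:=st) hc
  have hnin := NiN (A:=A) (B:=B) (a:=a) hA hB
  rw [← Nrows1, ← SE1, Qm]
  calc Nm A B a * Khat A B a c st ie * (Sm c st)ᵀ * Nim A B a *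
        (Nm A B a * (Sm c st * E1))
      = Nm A B a * (Khat A B a c st ie * ((Sm c st)ᵀ * ((Nim A B a * Nm A B a) *
          (Sm c st * E1)))) := by simp only [Matrix.mul_assoc]
    _ = Nm A B a * (Khat A B a c st ie * (((Sm c st)ᵀ * Sm c st) * E1)) := by
        rw [hnin, Matrix.one_mul]; simp only [Matrix.mul_assoc]
    _ = Nm A B a * fromRows (Km A B a c st ie) (0 : Matrix (Fin 2) (Fin 2) ℝ) := by
        rw [hsts, Matrix.one_mul, KhatE1]
    _ = Mhr A B a * Km A B a c st ie := NrowsK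

lemma gauge2 (hA : A ≠ 0) (hB : B ≠ 0) (hc : c^2 + st^2 = 1) :
    Qm A B a c st ie * (st • Mhr A B a + c • Ur2) = Ur2 * Km A B a c st ie := by
  have hsts := STS (c:=c) (st:=st) hc
  have hnin := NiN (A:=A) (B:=B) (a:=a) hA hB
  rw [← Nrows2, ← SE2, Qm]
  calc Nm A B a * Khat A B a c st ie * (Sm c st)ᵀ * Nim A B a *
        (Nm A B a * (Sm c st * E2))
      = Nm A B a * (Khat A B a c st ie * ((Sm c st)ᵀ * ((Nim A B a * Nm A B a) *
          (Sm c st * E2)))) := by simp only [Matrix.mul_assoc]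
    _ = Nm A B a * (Khat A B a c st ie * (((Sm c st)ᵀ * Sm c st) * E2)) := by
        rw [hnin, Matrix.one_mul]; simp only [Matrix.mul_assoc]
    _ = Nm A B a * fromRows (0 : Matrix (Fin 2) (Fin 2) ℝ) (Km A B a c st ie) := by
        rw [hsts, Matrix.one_mul, KhatE2]
    _ = Ur2 * Km A B a c st ie := NrowsK'

lemma Kdet (hc : c^2 + st^2 = 1)
    (R1 : (A^2+a^2)*(B^2+a^2) = 1) (R2 : A^2+B^2 = 2*a^2+2)
    (R3 : e^2 = 9 + 9*a^2) (hie : e * ie = 1) :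
    (Km A B a c st ie).det = 1 := by
  rw [Km, det_fin_two_of]
  linear_combination (1) * hc + (9/4*st^2*ie^2) * R1 + (9/4*st^2*ie^2) * R2 +
    (-1*st^2*ie^2) * R3 + (1*st^2*e*ie + 1*st^2) * hie





lemma qmapL : qmap (Lm A B) = !![(A:ℍ), 0; 0, (B:ℍ)] := by
  refine Matrix.ext fun i j => ?_
  fin_cases i <;> fin_cases j <;> simp [qmap, Lm]

lemma qmapM : qmap (Mm a) = !![0, (a:ℍ); (a:ℍ), 0] := by
  refine Matrix.ext fun i j => ?_
  fin_cases i <;> fin_cases j <;> simp [qmap, Mm]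

lemma MhQ : Mh !![(A:ℍ), 0; 0, (B:ℍ)] !![0, (a:ℍ); (a:ℍ), 0] = qmap (Mhr A B a) := by
  rw [Mh, Mhr, qmap_fromRows, qmapL, qmapM]

lemma UhQ : Uh 2 2 = qmap Ur2 := by
  rw [Uh, Ur2, qmap_fromRows, qmap_zero, qmap_one]

lemma rotEquiv (hA : 0 < A) (hB : 0 < B) (he : 0 < e)
    (R1 : (A^2+a^2)*(B^2+a^2) = 1) (R2 : A^2+B^2 = 2*a^2+2)
    (R3 : e^2 = 9 + 9*a^2) (R4 : 3*A^2 - 3*B^2 = -(4*(a*e)))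
    (hc : c^2 + st^2 = 1) :
    Equivariant !![(A:ℍ), 0; 0, (B:ℍ)] !![0, (a:ℍ); (a:ℍ), 0]
      !![((c:ℝ):ℍ), ((st:ℝ):ℍ); ((-st:ℝ):ℍ), ((c:ℝ):ℍ)] := by
  have hie : e * e⁻¹ = 1 := mul_inv_cancel₀ he.ne'
  have hdet : IsUnit (Km A B a c st e⁻¹).det := by
    rw [Kdet hc R1 R2 R3 hie]; exact isUnit_one
  have hKK : Km A B a c st e⁻¹ * (Km A B a c st e⁻¹)⁻¹ = 1 :=
    Matrix.mul_nonsing_inv _ hdet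
  refine ⟨qmap (Qm A B a c st e⁻¹), Km A B a c st e⁻¹, ?_, ?_, ?_, ?_⟩
  · rw [IsSp, qmap_conjTranspose, ← qmap_mul, Qorth hA.ne' hB.ne' hc R1 R2 R3 R4 hie,
      qmap_one]
  · exact (Matrix.isUnit_iff_isUnit_det _).2 hdet
  · have h1 : (confAct !![((c:ℝ):ℍ), ((st:ℝ):ℍ); ((-st:ℝ):ℍ), ((c:ℝ):ℍ)]
        (Mh !![(A:ℍ), 0; 0, (B:ℍ)] !![0, (a:ℍ); (a:ℍ), 0], Uh 2 2)).1
        = qmap (c • Mhr A B a - st • Ur2) := by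
      rw [confAct]
      show rsmul (Mh _ _) ((c:ℍ)) - rsmul (Uh 2 2) ((st:ℍ)) = _
      rw [MhQ, UhQ, rsmul_qmap, rsmul_qmap, qmap_sub]
    rw [gaugeAct, h1, ← qmap_mul, gauge1 hA.ne' hB.ne' hc, ← qmap_mul,
      Matrix.mul_assoc, hKK, Matrix.mul_one, MhQ]
  · have h2 : (confAct !![((c:ℝ):ℍ), ((st:ℝ):ℍ); ((-st:ℝ):ℍ), ((c:ℝ):ℍ)]
        (Mh !![(A:ℍ), 0; 0, (B:ℍ)] !![0, (a:ℍ); (a:ℍ), 0], Uh 2 2)).2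
        = qmap (st • Mhr A B a + c • Ur2) := by
      rw [confAct]
      show rsmul (Uh 2 2) ((c:ℍ)) - rsmul (Mh _ _) (((-st:ℝ):ℍ)) = _
      rw [MhQ, UhQ, rsmul_qmap, rsmul_qmap, ← qmap_sub]
      congr 1
      rw [neg_smul, sub_neg_eq_add, add_comm]
    rw [gaugeAct, h2, ← qmap_mul, gauge2 hA.ne' hB.ne' hc, ← qmap_mul,
      Matrix.mul_assoc, hKK, Matrix.mul_one, UhQ]


lemma rsmul_zero_right {n m : Type*} (X : Matrix n m ℍ) : rsmul X 0 = 0 := by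
  refine Matrix.ext fun i j => ?_
  simp [rsmul]

lemma diagEquiv (p : ℍ) (hp : ‖p‖ = 1) :
    Equivariant !![(A:ℍ), 0; 0, (B:ℍ)] !![0, (a:ℍ); (a:ℍ), 0] !![p, 0; 0, p] := by
  have hn : Quaternion.normSq p = 1 := by
    rw [Quaternion.normSq_eq_norm_mul_self, hp, mul_one]
  have hps : p * star p = 1 := by
    rw [Quaternion.self_mul_star, hn, Quaternion.coe_one]
  have hsp : star p * p = 1 := by
    rw [Quaternion.star_mul_self, hn, Quaternion.coe_one]
  have key : ∀ X : Matrix (Fin 2 ⊕ Fin 2) (Fin 2) ℝ,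
      Matrix.diagonal (fun _ : Fin 2 ⊕ Fin 2 => star p) * rsmul (qmap X) p = qmap X := by
    intro X
    refine Matrix.ext fun i j => ?_
    rw [Matrix.diagonal_mul]
    show star p * ((X i j : ℍ) * p) = (X i j : ℍ)
    rw [← mul_assoc, ← Quaternion.coe_commutes, mul_assoc, hsp, mul_one]
  refine ⟨Matrix.diagonal (fun _ => star p), 1, ?_, isUnit_one, ?_, ?_⟩
  · rw [IsSp, Matrix.diagonal_conjTranspose, Matrix.diagonal_mul_diagonal]
    show Matrix.diagonal (fun _ => star (star p) * star p) = 1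
    simp only [star_star, hps]
    exact Matrix.diagonal_one
  · have h1 : (confAct !![p, 0; 0, p]
        (Mh !![(A:ℍ), 0; 0, (B:ℍ)] !![0, (a:ℍ); (a:ℍ), 0], Uh 2 2)).1
        = rsmul (qmap (Mhr A B a)) p := by
      rw [confAct]
      show rsmul (Mh _ _) p - rsmul (Uh 2 2) (0:ℍ) = _
      rw [MhQ, rsmul_zero_right, sub_zero]
    rw [gaugeAct, h1, inv_one, qmap_one, Matrix.mul_one, key, MhQ]
  · have h2 : (confAct !![p, 0; 0, p]
        (Mh !![(A:ℍ), 0; 0, (B:ℍ)] !![0, (a:ℍ); (a:ℍ), 0], Uh 2 2)).2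
        = rsmul (qmap Ur2) p := by
      rw [confAct]
      show rsmul (Uh 2 2) p - rsmul (Mh _ _) (0:ℍ) = _
      rw [UhQ, MhQ, rsmul_zero_right, sub_zero]
    rw [gaugeAct, h2, inv_one, qmap_one, Matrix.mul_one, key, UhQ]

lemma qmap_isUnit {n : Type*} [Fintype n] [DecidableEq n] {X : Matrix n n ℝ}
    (h : IsUnit X.det) : IsUnit (qmap X) :=
  ⟨⟨qmap X, qmap X⁻¹,
    by rw [← qmap_mul, Matrix.mul_nonsing_inv _ h, qmap_one],
    by rw [← qmap_mul, Matrix.nonsing_inv_mul _ h, qmap_one]⟩, rfl⟩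

lemma coe_central (r : ℝ) (x : ℍ) : star x * ((r:ℍ) * x) = ((r * Quaternion.normSq x : ℝ) : ℍ) := by
  rw [Quaternion.coe_commutes, ← mul_assoc, Quaternion.star_mul_self, ← Quaternion.coe_mul,
    mul_comm]

lemma inM (hA : 0 < A) (hB : 0 < B)
    (R1 : (A^2+a^2)*(B^2+a^2) = 1) (R2 : A^2+B^2 = 2*a^2+2) :
    InM !![(A:ℍ), 0; 0, (B:ℍ)] !![0, (a:ℍ); (a:ℍ), 0] := by
  have hPP : (!![(A:ℍ), 0; 0, (B:ℍ)])ᴴ * !![(A:ℍ), 0; 0, (B:ℍ)]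
      + (!![0, (a:ℍ); (a:ℍ), 0])ᴴ * !![0, (a:ℍ); (a:ℍ), 0]
      = qmap !![A^2+a^2, 0; 0, B^2+a^2] := by
    refine Matrix.ext fun i j => ?_
    fin_cases i <;> fin_cases j <;>
      simp [Matrix.mul_apply, Fin.sum_univ_two, Matrix.conjTranspose_apply, qmap,
        Quaternion.star_coe, ← Quaternion.coe_mul, ← Quaternion.coe_add, sq]
  refine ⟨?_, ?_, ?_, ?_, ?_⟩
  · refine Matrix.ext fun i j => ?_
    fin_cases i <;> fin_cases j <;> simp
  · have hLL : !![(A:ℍ), 0; 0, (B:ℍ)] * (!![(A:ℍ), 0; 0, (B:ℍ)])ᴴ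
        = qmap !![A^2, 0; 0, B^2] := by
      refine Matrix.ext fun i j => ?_
      fin_cases i <;> fin_cases j <;>
        simp [Matrix.mul_apply, Fin.sum_univ_two, Matrix.conjTranspose_apply, qmap,
          Quaternion.star_coe, ← Quaternion.coe_mul, sq]
    rw [hLL]
    intro v hv
    refine ⟨A^2 * Quaternion.normSq (v 0) + B^2 * Quaternion.normSq (v 1), ?_, ?_⟩
    · have h01 : v 0 ≠ 0 ∨ v 1 ≠ 0 := by
        by_contra h
        push_neg at h
        exact hv (funext fun i => by fin_cases i <;> simp [h.1, h.2])
      have h0 : 0 ≤ Quaternion.normSq (v 0) := Quaternion.normSq_nonneg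
      have h1 : 0 ≤ Quaternion.normSq (v 1) := Quaternion.normSq_nonneg
      rcases h01 with h01 | h01
      · have h2 : 0 < Quaternion.normSq (v 0) :=
          lt_of_le_of_ne h0 (Ne.symm (Quaternion.normSq_ne_zero.2 h01))
        nlinarith [mul_pos (mul_pos hA hA) h2, mul_nonneg (mul_nonneg hB.le hB.le) h1]
      · have h2 : 0 < Quaternion.normSq (v 1) :=
          lt_of_le_of_ne h1 (Ne.symm (Quaternion.normSq_ne_zero.2 h01))
        nlinarith [mul_pos (mul_pos hB hB) h2, mul_nonneg (mul_nonneg hA.le hA.le) h0]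
    · simp only [dotProduct, Matrix.mulVec, Fin.sum_univ_two, Pi.star_apply, qmap,
        Matrix.map_apply, Matrix.of_apply, Matrix.cons_val', Matrix.cons_val_zero,
        Matrix.cons_val_one, Matrix.head_cons, Matrix.empty_val', Matrix.cons_val_fin_one,
        Matrix.head_fin_const, Quaternion.coe_zero, zero_mul, add_zero, zero_add]
      rw [coe_central, coe_central, ← Quaternion.coe_add]
  · intro i j
    rw [hPP]
    simp [qmap]
  · rw [hPP]
    apply qmap_isUnit
    rw [Matrix.det_fin_two_of]
    have : (A^2+a^2) * (B^2+a^2) - 0 * 0 = 1 := by linear_combination R1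
    rw [this]
    exact isUnit_one
  · intro x
    have hr2 : x.re ^ 2 ≤ Quaternion.normSq x := by
      rw [Quaternion.normSq_def']
      nlinarith [sq_nonneg x.imI, sq_nonneg x.imJ, sq_nonneg x.imK]
    have hn0 : 0 ≤ Quaternion.normSq x := Quaternion.normSq_nonneg
    have hDx : (Delta (Mh !![(A:ℍ), 0; 0, (B:ℍ)] !![0, (a:ℍ); (a:ℍ), 0]) (Uh 2 2) x)ᴴ
        * Delta (Mh !![(A:ℍ), 0; 0, (B:ℍ)] !![0, (a:ℍ); (a:ℍ), 0]) (Uh 2 2) x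
        = qmap !![A^2+a^2 + Quaternion.normSq x, -(2*a*x.re);
                  -(2*a*x.re), B^2+a^2 + Quaternion.normSq x] := by
      refine Matrix.ext fun i j => ?_
      fin_cases i <;> fin_cases j <;>
        simp only [Delta, Matrix.mul_apply, Fintype.sum_sum_type, Fin.sum_univ_two,
          Matrix.conjTranspose_apply, Matrix.sub_apply, Mh, Uh, rsmul, Matrix.map_apply,
          Matrix.fromRows_apply_inl, Matrix.fromRows_apply_inr, Matrix.zero_apply,
          Matrix.one_apply, qmap, Matrix.of_apply, Matrix.cons_val', Matrix.cons_val_zero,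
          Matrix.cons_val_one, Matrix.head_cons, Matrix.empty_val',
          Matrix.cons_val_fin_one, Matrix.head_fin_const, Fin.isValue, Fin.mk_zero,
          Fin.mk_one, reduceIte, Fin.zero_eq_one_iff, Fin.one_eq_zero_iff, Ne,
          OfNat.ofNat_ne_one, not_false_iff, one_mul, zero_mul, mul_zero, mul_one,
          zero_sub, sub_zero, star_neg, star_zero, neg_mul, mul_neg, neg_neg,
          add_zero, zero_add, Quaternion.star_coe, reduceCtorEq, if_true, if_false]
      · rw [Quaternion.star_mul_self, ← Quaternion.coe_mul, ← Quaternion.coe_mul,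
          ← Quaternion.coe_add, ← Quaternion.coe_add]
        exact congrArg (fun r : ℝ => (r : ℍ)) (by ring)
      · rw [show star x * (a:ℍ) = (a:ℍ) * star x from (Quaternion.coe_commutes a (star x)).symm,
          ← neg_add, ← mul_add, Quaternion.star_add_self', ← Quaternion.coe_mul,
          ← Quaternion.coe_neg]
        exact congrArg (fun r : ℝ => (r : ℍ)) (by ring)
      · rw [show star x * (a:ℍ) = (a:ℍ) * star x from (Quaternion.coe_commutes a (star x)).symm,
          ← neg_add, ← mul_add, Quaternion.self_add_star', ← Quaternion.coe_mul,
          ← Quaternion.coe_neg]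
        exact congrArg (fun r : ℝ => (r : ℍ)) (by ring)
      · rw [Quaternion.star_mul_self, ← Quaternion.coe_mul, ← Quaternion.coe_mul,
          ← Quaternion.coe_add, ← Quaternion.coe_add]
        exact congrArg (fun r : ℝ => (r : ℍ)) (by ring)
    rw [hDx]
    apply qmap_isUnit
    rw [Matrix.det_fin_two_of]
    have hkey : (A^2+a^2 + Quaternion.normSq x) * (B^2+a^2 + Quaternion.normSq x)
        - (-(2*a*x.re)) * (-(2*a*x.re))
        = (Quaternion.normSq x + 1)^2 + 4*a^2*(Quaternion.normSq x - x.re^2) := by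
      linear_combination R1 + Quaternion.normSq x * R2
    have hpos : 0 < (A^2+a^2 + Quaternion.normSq x) * (B^2+a^2 + Quaternion.normSq x)
        - (-(2*a*x.re)) * (-(2*a*x.re)) := by
      rw [hkey]
      nlinarith [sq_nonneg a, sq_nonneg (Quaternion.normSq x + 1)]
    exact isUnit_iff_ne_zero.2 (ne_of_gt hpos)

end S19

/-- A novel example of ADHM data in `M_{2,2}` with conformal superspherical
symmetry. -/
theorem stmt19 (B : ℝ) (hB0 : 0 < B) (hB1 : B < 2 / 3 * Real.sqrt 6) :
    let s : ℝ := Real.sqrt (B ^ 4 - B ^ 2 + 1)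
    let A : ℝ := Real.sqrt (12 - 15 * B ^ 2 + 12 * s) / 3
    let a : ℝ := (2 * B ^ 2 - s - 1) / Real.sqrt (-3 * B ^ 2 + 6 + 6 * s)
    let L : Matrix (Fin 2) (Fin 2) ℍ := !![(A : ℍ), 0; 0, (B : ℍ)]
    let M : Matrix (Fin 2) (Fin 2) ℍ := !![0, (a : ℍ); (a : ℍ), 0]
    0 < 12 - 15 * B ^ 2 + 12 * s ∧
    0 < -3 * B ^ 2 + 6 + 6 * s ∧
    0 < A ∧
    InM L M ∧
    (∀ p : ℍ, ‖p‖ = 1 → Equivariant L M !![p, 0; 0, p]) ∧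
    (∀ θ : ℝ, Equivariant L M
      !![((Real.cos θ : ℝ) : ℍ), ((Real.sin θ : ℝ) : ℍ);
         ((-Real.sin θ : ℝ) : ℍ), ((Real.cos θ : ℝ) : ℍ)]) := by
  intro s A a L M
  have hrad : 0 < B^4 - B^2 + 1 := by nlinarith [sq_nonneg (2*B^2 - 1)]
  have hs0 : 0 < s := Real.sqrt_pos.2 hrad
  have hs2 : s^2 = B^4 - B^2 + 1 := Real.sq_sqrt hrad.le
  have h6 : Real.sqrt 6 ^ 2 = 6 := Real.sq_sqrt (by norm_num)
  have hB83 : B^2 < 8/3 := by nlinarith [Real.sqrt_nonneg 6]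
  have g1 : 0 < 12 - 15 * B ^ 2 + 12 * s := by
    nlinarith [hs2, hs0, hB83, mul_pos hB0 hB0, sq_nonneg (12*s - 15*B^2 + 12),
      sq_nonneg (12*s + 15*B^2 - 12)]
  have g2 : 0 < -3 * B ^ 2 + 6 + 6 * s := by
    nlinarith [hs2, hs0, hB83, sq_nonneg (2*s - 1)]
  have hA0 : 0 < A := div_pos (Real.sqrt_pos.2 g1) (by norm_num)
  have hA2 : A^2 * 9 = 12 - 15*B^2 + 12*s := by
    have : A^2 = (12 - 15*B^2 + 12*s) / 9 := by
      show (Real.sqrt (12 - 15*B^2 + 12*s) / 3)^2 = _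
      rw [div_pow, Real.sq_sqrt g1.le]
      norm_num
    linarith
  set e : ℝ := Real.sqrt (-3*B^2 + 6 + 6*s) with hedef
  have he0 : 0 < e := Real.sqrt_pos.2 g2
  have he2 : e^2 = -3*B^2 + 6 + 6*s := Real.sq_sqrt g2.le
  have ha : a * e = 2*B^2 - s - 1 := by
    show (2*B^2 - s - 1) / e * e = _
    exact div_mul_cancel₀ _ he0.ne'
  have hR2 : A^2 + B^2 = 2*a^2 + 2 := by
    have h' : e^2 * (A^2 + B^2) = e^2 * (2*a^2 + 2) := by
      linear_combination (1/9*e^2) * hA2 + (-2*a*e + 2*s - 4*B^2 + 2) * ha +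
        (4/3*s - 2/3*B^2 - 2/3) * he2 + 6 * hs2
    exact mul_left_cancel₀ (pow_ne_zero 2 he0.ne') h'
  have hR1 : (A^2 + a^2) * (B^2 + a^2) = 1 := by
    have h' : (e^2 * e^2) * ((A^2 + a^2) * (B^2 + a^2)) = (e^2 * e^2) * 1 := by
      linear_combination (1/9*a^2*e^4 + 1/9*e^4*B^2) * hA2 +
        (a^3*e^3 - a^2*e^2*s + 2*a^2*e^2*B^2 - a^2*e^2 + 4/3*a*e^3*s - 2/3*a*e^3*B^2
          + 4/3*a*e^3 + a*e*s^2 - 4*a*e*s*B^2 + 2*a*e*s + 4*a*e*B^4 - 4*a*e*B^2 + a*e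
          - 4/3*e^2*s^2 + 10/3*e^2*s*B^2 - 8/3*e^2*s - 4/3*e^2*B^4 + 10/3*e^2*B^2
          - 4/3*e^2 - s^3 + 6*s^2*B^2 - 3*s^2 - 12*s*B^4 + 12*s*B^2 - 3*s + 8*B^6
          - 12*B^4 + 6*B^2 - 1) * ha +
        (4/3*e^2*s*B^2 - 5/3*e^2*B^4 + 4/3*e^2*B^2 - e^2 + 4/3*s^3 + 2*s^2*B^2 + 4*s^2
          - 6*s*B^4 + 4*s*B^2 - 2*s + 7/3*B^6 - 6*B^4 + 5*B^2 - 14/3) * he2 +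
        (9*s^2 + 36*s - 9*B^4 - 9*B^2 + 27) * hs2
    exact mul_left_cancel₀ (by positivity) h'
  have hR3 : e^2 = 9 + 9*a^2 := by
    have h' : e^2 * e^2 = e^2 * (9 + 9*a^2) := by
      linear_combination (-9*a*e + 9*s - 18*B^2 + 9) * ha + (e^2 + 6*s - 3*B^2 - 3) * he2 +
        27 * hs2
    exact mul_left_cancel₀ (pow_ne_zero 2 he0.ne') h'
  have hR4 : 3*A^2 - 3*B^2 = -(4*(a*e)) := by
    linear_combination (1/3) * hA2 + 4 * ha
  refine ⟨g1, g2, hA0, ?_, ?_, ?_⟩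
  · exact S19.inM hA0 hB0 hR1 hR2
  · intro p hp
    exact S19.diagEquiv p hp
  · intro θ
    exact S19.rotEquiv hA0 hB0 he0 hR1 hR2 hR3 hR4 (Real.cos_sq_add_sin_sq θ)
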